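/- Let A, B, C be three independent standard Brownian motions on a common probability space, let α, β ∈ [−1, 1], and define the correlated Brownian motions U_t = α A_t + √(1−α²) B_t and W_t = β A_t + √(1−β²) C_t, with correlation ρ = αβ. Let X̄₁, X̄₂ > 0, σ₁, σ₂ > 0, λ₁ > σ₁²/2, λ₂ > σ₂²/2, and define u(t) = ( λ₁ X̄₁ ∫₀^t e^{−(λ₁ + σ₁²/2) x} e^{σ₁ U_x} dx ) · ( λ₂ X̄₂ ∫₀^t e^{−(λ₂ + σ₂²/2) y} e^{σ₂ W_y} dy ). Then lim_{t→∞} E[u(t)] = X̄₁ X̄₂ (λ₁ + λ₂) / ( λ₁ + λ₂ − ρ σ₁ σ₂ ). In particular, when ρ ≠ 0 the limiting mean differs from the uncorrelated value X̄₁ X̄₂: positive correlation increases it and negative correlation decreases it. -/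

import Mathlib

open MeasureTheory ProbabilityTheory Filter Real

/-- `W` is a standard Brownian motion on the probability space `Ω`: each `W t` is
measurable, `W 0 = 0` almost surely, `W` has independent increments, the increment
`W t − W s` (for `0 ≤ s ≤ t`) is Gaussian with mean `0` and variance `t − s`, and the
sample paths are almost surely continuous. -/
def IsStdBrownianMotion {Ω : Type*} [MeasureSpace Ω] (W : ℝ → Ω → ℝ) : Prop :=
  (∀ t, Measurable (W t)) ∧
  (∀ᵐ ω, W 0 ω = 0) ∧
  (∀ (n : ℕ) (t : Fin (n + 1) → ℝ), Monotone t →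
      iIndepFun
        (fun i : Fin n => fun ω => W (t i.succ) ω - W (t i.castSucc) ω) ℙ) ∧
  (∀ s t : ℝ, 0 ≤ s → s ≤ t →
      Measure.map (fun ω => W t ω - W s ω) ℙ = gaussianReal 0 (Real.toNNReal (t - s))) ∧
  (∀ᵐ ω, Continuous fun t => W t ω)

/-!
For `x, y ≥ 0` the variable `σ₁ U_x + σ₂ W_y` is centred Gaussian with variance
`σ₁² x + σ₂² y + 2 ρ σ₁ σ₂ min x y`, so by Tonelli
`E[u(t)] = λ₁ X̄₁ λ₂ X̄₂ ∫∫_{(0,t]²} exp (-λ₁ x - λ₂ y + ρ σ₁ σ₂ min x y) dx dy`.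
By monotone convergence this tends to the integral over the open quadrant; splitting it along
the diagonal gives `1 / (λ₂ (λ₁ + λ₂ - ρσ₁σ₂)) + 1 / (λ₁ (λ₁ + λ₂ - ρσ₁σ₂))`, which is finite
because `|ρ σ₁ σ₂| ≤ (σ₁² + σ₂²) / 2 < λ₁ + λ₂`.
-/

open Set
open scoped ENNReal

namespace IsStdBrownianMotion

variable {Ω : Type*} [MeasureSpace Ω] {A : ℝ → Ω → ℝ}

lemma mgf_sub (hA : IsStdBrownianMotion A) {s t : ℝ} (hs : 0 ≤ s) (hst : s ≤ t) (c : ℝ) :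
    mgf (fun ω => A t ω - A s ω) ℙ c = exp ((t - s) * c ^ 2 / 2) := by
  rw [mgf_gaussianReal (hA.2.2.2.1 s t hs hst), Real.coe_toNNReal _ (sub_nonneg.2 hst)]
  ring_nf

lemma mgf_eq (hA : IsStdBrownianMotion A) {t : ℝ} (ht : 0 ≤ t) (c : ℝ) :
    mgf (A t) ℙ c = exp (t * c ^ 2 / 2) := by
  have h : A t =ᵐ[ℙ] fun ω => A t ω - A 0 ω := by
    filter_upwards [hA.2.1] with ω h0
    rw [h0, sub_zero]
  rw [mgf_congr h, hA.mgf_sub le_rfl ht, sub_zero]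

lemma indepFun_sub (hA : IsStdBrownianMotion A) {r s t : ℝ} (hrs : r ≤ s) (hst : s ≤ t) :
    IndepFun (fun ω => A s ω - A r ω) (fun ω => A t ω - A s ω) ℙ := by
  have hmono : Monotone ![r, s, t] := by
    rw [Fin.monotone_iff_le_succ]
    intro i
    fin_cases i <;> simp [hrs, hst]
  exact (hA.2.2.1 2 _ hmono).indepFun (show (0 : Fin 2) ≠ 1 by decide)

lemma mgf_mul_add_mul_of_le (hA : IsStdBrownianMotion A) {x y : ℝ} (hx : 0 ≤ x) (hxy : x ≤ y)
    (a b : ℝ) :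
    mgf (fun ω => a * A x ω + b * A y ω) ℙ 1
      = exp ((a ^ 2 * x + b ^ 2 * y) / 2 + a * b * x) := by
  have hsplit : (fun ω => a * A x ω + b * A y ω)
      =ᵐ[ℙ] (fun ω => (a + b) * (A x ω - A 0 ω)) + fun ω => b * (A y ω - A x ω) := by
    filter_upwards [hA.2.1] with ω h0
    simp only [Pi.add_apply, h0]
    ring
  have hind : IndepFun (fun ω => (a + b) * (A x ω - A 0 ω)) (fun ω => b * (A y ω - A x ω)) ℙ :=
    (hA.indepFun_sub hx hxy).comp (measurable_const_mul _) (measurable_const_mul _)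
  have hmeas : ∀ r s, AEStronglyMeasurable (fun ω => A s ω - A r ω) ℙ := fun r s =>
    ((hA.1 s).sub (hA.1 r)).aestronglyMeasurable
  rw [mgf_congr hsplit, IndepFun.mgf_add' hind ((hmeas 0 x).const_mul _) ((hmeas x y).const_mul _),
    mgf_const_mul, mgf_const_mul, hA.mgf_sub le_rfl hx, hA.mgf_sub hx hxy, ← exp_add]
  ring_nf

lemma mgf_mul_add_mul (hA : IsStdBrownianMotion A) {x y : ℝ} (hx : 0 ≤ x) (hy : 0 ≤ y) (a b : ℝ) :
    mgf (fun ω => a * A x ω + b * A y ω) ℙ 1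
      = exp ((a ^ 2 * x + b ^ 2 * y) / 2 + a * b * min x y) := by
  rcases le_total x y with hxy | hyx
  · rw [hA.mgf_mul_add_mul_of_le hx hxy, min_eq_left hxy]
  · simp_rw [add_comm (a * A x _)]
    rw [hA.mgf_mul_add_mul_of_le hy hyx, min_eq_right hyx]
    ring_nf

end IsStdBrownianMotion

lemma mgf_combination_of_iIndepFun_brownian {Ω : Type*} [MeasureSpace Ω] {A B C : ℝ → Ω → ℝ}
    (hA : IsStdBrownianMotion A) (hB : IsStdBrownianMotion B) (hC : IsStdBrownianMotion C)
    (hindep : iIndepFun (fun i : Fin 3 => fun ω => fun t : ℝ => (![A, B, C] i) t ω) ℙ)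
    {x y : ℝ} (hx : 0 ≤ x) (hy : 0 ≤ y) (p q r s : ℝ) :
    mgf (fun ω => (p * A x ω + q * B x ω) + (r * A y ω + s * C y ω)) ℙ 1
      = exp (((p ^ 2 + q ^ 2) * x + (r ^ 2 + s ^ 2) * y) / 2 + p * r * min x y) := by
  have hpath : ∀ i, Measurable fun ω => fun t : ℝ => (![A, B, C] i) t ω := by
    intro i
    fin_cases i
    exacts [measurable_pi_lambda _ hA.1, measurable_pi_lambda _ hB.1, measurable_pi_lambda _ hC.1]
  have hAB_C : IndepFun (fun ω => p * A x ω + r * A y ω + q * B x ω) (fun ω => s * C y ω) ℙ :=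
    (hindep.indepFun_prodMk hpath 0 1 2 (by decide) (by decide)).comp
      (φ := fun P : (ℝ → ℝ) × (ℝ → ℝ) => p * P.1 x + r * P.1 y + q * P.2 x)
      (ψ := fun P : ℝ → ℝ => s * P y) (by fun_prop) (by fun_prop)
  have hA_B : IndepFun (fun ω => p * A x ω + r * A y ω) (fun ω => q * B x ω) ℙ :=
    (hindep.indepFun (show (0 : Fin 3) ≠ 1 by decide)).comp
      (φ := fun P : ℝ → ℝ => p * P x + r * P y) (ψ := fun P : ℝ → ℝ => q * P x)
      (by fun_prop) (by fun_prop)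
  have hsum : (fun ω => (p * A x ω + q * B x ω) + (r * A y ω + s * C y ω))
      = (fun ω => p * A x ω + r * A y ω + q * B x ω) + fun ω => s * C y ω := by
    ext ω
    simp only [Pi.add_apply]
    ring
  have hAm := hA.1
  have hBm := hB.1
  have hCm := hC.1
  have hmgfAB : mgf (fun ω => p * A x ω + r * A y ω + q * B x ω) ℙ 1
      = mgf (fun ω => p * A x ω + r * A y ω) ℙ 1 * mgf (fun ω => q * B x ω) ℙ 1 :=
    hA_B.mgf_add' (by fun_prop) (by fun_prop)
  rw [hsum, hAB_C.mgf_add' (by fun_prop) (by fun_prop), hmgfAB, hA.mgf_mul_add_mul hx hy,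
    mgf_const_mul, mgf_const_mul, hB.mgf_eq hx, hC.mgf_eq hy, ← exp_add, ← exp_add]
  ring_nf

lemma exists_modification_forall_continuous {Ω ι E : Type*} [MeasurableSpace Ω]
    {μ : Measure Ω} [TopologicalSpace ι] [TopologicalSpace E] [MeasurableSpace E] [Zero E]
    {X : ι → Ω → E} (hX : ∀ t, Measurable (X t)) (hXc : ∀ᵐ ω ∂μ, Continuous fun t => X t ω) :
    ∃ Y : ι → Ω → E, (∀ t, Measurable (Y t)) ∧ (∀ ω, Continuous fun t => Y t ω) ∧
      ∀ᵐ ω ∂μ, ∀ t, Y t ω = X t ω := by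
  classical
  set N := toMeasurable μ {ω | ¬Continuous fun t => X t ω}
  refine ⟨fun t => N.piecewise 0 (X t),
    fun t => measurable_const.piecewise (measurableSet_toMeasurable _ _) (hX t), fun ω => ?_, ?_⟩
  · by_cases hω : ω ∈ N
    · simp only [Set.piecewise_eq_of_mem _ _ _ hω]
      exact continuous_const
    · simp only [Set.piecewise_eq_of_notMem _ _ _ hω]
      exact not_not.1 fun h => hω (subset_toMeasurable _ _ h)
  · have hN : μ N = 0 := by rwa [measure_toMeasurable, ← ae_iff]
    filter_upwards [measure_eq_zero_iff_ae_notMem.1 hN] with ω hω t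
    exact Set.piecewise_eq_of_notMem _ _ _ hω

lemma ofReal_mgf_eq_lintegral {Ω : Type*} [MeasurableSpace Ω] {μ : Measure Ω} {X : Ω → ℝ}
    {t : ℝ} [NeZero μ] (h : 0 < mgf X μ t) :
    ENNReal.ofReal (mgf X μ t) = ∫⁻ ω, ENNReal.ofReal (exp (t * X ω)) ∂μ :=
  ofReal_integral_eq_lintegral_ofReal (mgf_pos_iff.1 h) (ae_of_all _ fun _ => (exp_pos _).le)

lemma lintegral_ofReal_setIntegral_mul_setIntegral {α Ω : Type*} [MeasurableSpace α]
    [MeasurableSpace Ω] {ν : Measure α} {μ : Measure Ω} [SFinite ν] [SFinite μ] {s s' : Set α}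
    {F G : α → Ω → ℝ} (hF : Measurable (Function.uncurry F))
    (hG : Measurable (Function.uncurry G)) (hF0 : ∀ x ω, 0 ≤ F x ω) (hG0 : ∀ y ω, 0 ≤ G y ω)
    (hFi : ∀ ω, IntegrableOn (F · ω) s ν) (hGi : ∀ ω, IntegrableOn (G · ω) s' ν) :
    ∫⁻ ω, ENNReal.ofReal ((∫ x in s, F x ω ∂ν) * ∫ y in s', G y ω ∂ν) ∂μ
      = ∫⁻ p in s ×ˢ s', ∫⁻ ω, ENNReal.ofReal (F p.1 ω) * ENNReal.ofReal (G p.2 ω) ∂μ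
          ∂(ν.prod ν) := by
  have hω : ∀ ω, ENNReal.ofReal ((∫ x in s, F x ω ∂ν) * ∫ y in s', G y ω ∂ν)
      = ∫⁻ p in s ×ˢ s', ENNReal.ofReal (F p.1 ω) * ENNReal.ofReal (G p.2 ω) ∂(ν.prod ν) := by
    intro ω
    rw [ENNReal.ofReal_mul (integral_nonneg fun x => hF0 x ω),
      ofReal_integral_eq_lintegral_ofReal (hFi ω) (ae_of_all _ fun x => hF0 x ω),
      ofReal_integral_eq_lintegral_ofReal (hGi ω) (ae_of_all _ fun y => hG0 y ω),
      ← Measure.prod_restrict, ← lintegral_prod_mul]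
    · exact (hF.comp (measurable_id.prodMk measurable_const)).ennreal_ofReal.aemeasurable
    · exact (hG.comp (measurable_id.prodMk measurable_const)).ennreal_ofReal.aemeasurable
  simp_rw [hω]
  refine lintegral_lintegral_swap (Measurable.aemeasurable ?_)
  exact (hF.comp (measurable_snd.fst.prodMk measurable_fst)).ennreal_ofReal.mul
    (hG.comp (measurable_snd.snd.prodMk measurable_fst)).ennreal_ofReal

lemma measurableSet_pos_lt : MeasurableSet {p : ℝ × ℝ | 0 < p.1 ∧ p.1 < p.2} :=
  (measurableSet_lt measurable_const measurable_fst).inter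
    (measurableSet_lt measurable_fst measurable_snd)

lemma lintegral_Ioi_zero_ofReal_exp_neg_mul {a : ℝ} (ha : 0 < a) :
    ∫⁻ x in Ioi (0 : ℝ), ENNReal.ofReal (exp (-a * x)) = ENNReal.ofReal (1 / a) := by
  rw [← ofReal_integral_eq_lintegral_ofReal (integrableOn_exp_mul_Ioi (neg_neg_of_pos ha) 0)
    (ae_of_all _ fun _ => (exp_pos _).le), integral_exp_mul_Ioi (neg_neg_of_pos ha)]
  simp [div_neg, neg_div]

-- The shear `(x, s) ↦ (x, x + s)` maps the open quadrant onto the region and splits the integrand.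
lemma setLIntegral_pos_lt_ofReal_exp {κ μ : ℝ} (hμ : 0 < μ) (hκμ : 0 < κ + μ) :
    ∫⁻ p in {p : ℝ × ℝ | 0 < p.1 ∧ p.1 < p.2}, ENNReal.ofReal (exp (-κ * p.1 - μ * p.2))
      = ENNReal.ofReal (1 / ((κ + μ) * μ)) := by
  have hshear := measurePreserving_prod_add (volume : Measure ℝ) (volume : Measure ℝ)
  have hpre : (fun p : ℝ × ℝ => (p.1, p.1 + p.2)) ⁻¹' {p | 0 < p.1 ∧ p.1 < p.2}
      = Ioi 0 ×ˢ Ioi 0 := by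
    ext p
    simp
  rw [Measure.volume_eq_prod, ← hshear.setLIntegral_comp_preimage measurableSet_pos_lt
    (by fun_prop), hpre, ← Measure.prod_restrict]
  have hsplit : ∀ p : ℝ × ℝ, ENNReal.ofReal (exp (-κ * p.1 - μ * (p.1 + p.2)))
      = ENNReal.ofReal (exp (-(κ + μ) * p.1)) * ENNReal.ofReal (exp (-μ * p.2)) := by
    intro p
    rw [← ENNReal.ofReal_mul (exp_pos _).le, ← exp_add]
    ring_nf
  simp_rw [hsplit]
  rw [lintegral_prod_mul (f := fun x => ENNReal.ofReal (exp (-(κ + μ) * x)))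
    (g := fun y => ENNReal.ofReal (exp (-μ * y))) (by fun_prop) (by fun_prop),
    lintegral_Ioi_zero_ofReal_exp_neg_mul hκμ, lintegral_Ioi_zero_ofReal_exp_neg_mul hμ,
    ← ENNReal.ofReal_mul (by positivity)]
  congr 1
  field_simp

lemma volume_diagonal_real : volume (diagonal ℝ) = 0 := by
  rw [Measure.volume_eq_prod, Measure.measure_prod_null measurableSet_diagonal]
  exact ae_of_all _ fun x => by simp [preimage, diagonal]

-- `exp (-(λ₁ + σ₁²/2) x - (λ₂ + σ₂²/2) y) E[exp (σ₁ U_x + σ₂ W_y)]`, with `c = ρ σ₁ σ₂`.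
noncomputable def expMinKernel (l₁ l₂ c : ℝ) (p : ℝ × ℝ) : ℝ≥0∞ :=
  ENNReal.ofReal (exp (-l₁ * p.1 - l₂ * p.2 + c * min p.1 p.2))

lemma expMinKernel_swap (l₁ l₂ c : ℝ) (p : ℝ × ℝ) :
    expMinKernel l₂ l₁ c p.swap = expMinKernel l₁ l₂ c p := by
  simp only [expMinKernel, Prod.fst_swap, Prod.snd_swap, min_comm p.2]
  ring_nf

lemma setLIntegral_pos_lt_expMinKernel {l₁ l₂ c : ℝ} (h₂ : 0 < l₂) (hc : c < l₁ + l₂) :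
    ∫⁻ p in {p : ℝ × ℝ | 0 < p.1 ∧ p.1 < p.2}, expMinKernel l₁ l₂ c p
      = ENNReal.ofReal (1 / ((l₁ + l₂ - c) * l₂)) := by
  rw [setLIntegral_congr_fun measurableSet_pos_lt
    (g := fun p => ENNReal.ofReal (exp (-(l₁ - c) * p.1 - l₂ * p.2)))
    fun p hp => by simp only [expMinKernel, min_eq_left hp.2.le]; ring_nf,
    setLIntegral_pos_lt_ofReal_exp h₂ (by linarith)]
  ring_nf

lemma setLIntegral_expMinKernel_Ioi_prod_Ioi {l₁ l₂ c : ℝ} (h₁ : 0 < l₁) (h₂ : 0 < l₂)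
    (hc : c < l₁ + l₂) :
    ∫⁻ p in Ioi 0 ×ˢ Ioi 0, expMinKernel l₁ l₂ c p
      = ENNReal.ofReal ((l₁ + l₂) / (l₁ * l₂ * (l₁ + l₂ - c))) := by
  have hd : 0 < l₁ + l₂ - c := by linarith
  set R := {p : ℝ × ℝ | 0 < p.1 ∧ p.1 < p.2}
  have hQ : (Ioi 0 ×ˢ Ioi 0 : Set (ℝ × ℝ)) \ diagonal ℝ = R ∪ Prod.swap ⁻¹' R := by
    ext ⟨x, y⟩
    simp only [Set.mem_sdiff, mem_prod, mem_Ioi, mem_diagonal_iff, mem_union, mem_ofPred_eq,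
      mem_preimage, Prod.fst_swap, Prod.snd_swap, R]
    constructor
    · rintro ⟨⟨hx, hy⟩, hxy⟩
      rcases lt_or_gt_of_ne hxy with h | h
      exacts [Or.inl ⟨hx, h⟩, Or.inr ⟨hy, h⟩]
    · rintro (⟨hx, h⟩ | ⟨hy, h⟩)
      exacts [⟨⟨hx, hx.trans h⟩, h.ne⟩, ⟨⟨hy.trans h, hy⟩, h.ne'⟩]
  have hdisj : Disjoint R (Prod.swap ⁻¹' R) :=
    disjoint_left.2 fun p h h' => lt_asymm h.2 h'.2
  have hswap : ∫⁻ p in Prod.swap ⁻¹' R, expMinKernel l₁ l₂ c p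
      = ∫⁻ p in R, expMinKernel l₂ l₁ c p := by
    simp_rw [← expMinKernel_swap l₁ l₂ c]
    rw [Measure.volume_eq_prod]
    exact Measure.measurePreserving_swap.setLIntegral_comp_preimage measurableSet_pos_lt
      (by unfold expMinKernel; fun_prop)
  rw [← setLIntegral_congr (sdiff_null_ae_eq_self volume_diagonal_real), hQ,
    lintegral_union (measurable_swap measurableSet_pos_lt) hdisj, hswap,
    setLIntegral_pos_lt_expMinKernel h₂ hc, setLIntegral_pos_lt_expMinKernel h₁ (by linarith),
    ← ENNReal.ofReal_add (one_div_pos.2 (mul_pos hd h₂)).le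
      (one_div_pos.2 (mul_pos (by linarith) h₁)).le]
  congr 1
  field_simp [hd.ne', show l₂ + l₁ - c ≠ 0 by linarith]
  ring

lemma tendsto_setLIntegral_Ioc_prod_Ioc (f : ℝ × ℝ → ℝ≥0∞) :
    Tendsto (fun t : ℝ => ∫⁻ p in Ioc 0 t ×ˢ Ioc 0 t, f p) atTop
      (nhds (∫⁻ p in Ioi 0 ×ˢ Ioi 0, f p)) := by
  simp_rw [← withDensity_apply' f]
  have hmono : Monotone fun t : ℝ => Ioc (0 : ℝ) t ×ˢ Ioc (0 : ℝ) t := fun s t hst =>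
    prod_mono (Ioc_subset_Ioc_right hst) (Ioc_subset_Ioc_right hst)
  have hunion : ⋃ t : ℝ, Ioc (0 : ℝ) t ×ˢ Ioc (0 : ℝ) t = Ioi 0 ×ˢ Ioi 0 := by
    ext p
    simp only [mem_iUnion, mem_prod, mem_Ioc, mem_Ioi]
    exact ⟨fun ⟨t, ⟨hx, _⟩, hy, _⟩ => ⟨hx, hy⟩,
      fun ⟨hx, hy⟩ => ⟨max p.1 p.2, ⟨hx, le_max_left _ _⟩, hy, le_max_right _ _⟩⟩
  rw [← hunion]
  exact tendsto_measure_iUnion_atTop hmono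

section ProductInput

variable {Ω : Type*} [MeasureSpace Ω] [IsProbabilityMeasure (ℙ : Measure Ω)]
  {X Y : ℝ → Ω → ℝ} (hXm : ∀ t, Measurable (X t)) (hYm : ∀ t, Measurable (Y t))
  {σ₁ σ₂ l₁ l₂ c : ℝ}
  (hmgf : ∀ x y, 0 ≤ x → 0 ≤ y → mgf (fun ω => σ₁ * X x ω + σ₂ * Y y ω) ℙ 1
    = exp (σ₁ ^ 2 * x / 2 + σ₂ ^ 2 * y / 2 + c * min x y))
include hXm hYm hmgf

lemma integral_setIntegral_mul_setIntegral_exp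
    (hXc : ∀ ω, Continuous fun t => X t ω) (hYc : ∀ ω, Continuous fun t => Y t ω) (t : ℝ) :
    ∫ ω, (∫ x in Ioc 0 t, exp (-(l₁ + σ₁ ^ 2 / 2) * x) * exp (σ₁ * X x ω)) *
        ∫ y in Ioc 0 t, exp (-(l₂ + σ₂ ^ 2 / 2) * y) * exp (σ₂ * Y y ω)
      = (∫⁻ p in Ioc 0 t ×ˢ Ioc 0 t, expMinKernel l₁ l₂ c p).toReal := by
  set F : ℝ → Ω → ℝ := fun x ω => exp (-(l₁ + σ₁ ^ 2 / 2) * x) * exp (σ₁ * X x ω)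
  set G : ℝ → Ω → ℝ := fun y ω => exp (-(l₂ + σ₂ ^ 2 / 2) * y) * exp (σ₂ * Y y ω)
  have hF : Measurable (Function.uncurry F) :=
    measurable_uncurry_of_continuous_of_measurable (fun ω => by fun_prop) fun x => by fun_prop
  have hG : Measurable (Function.uncurry G) :=
    measurable_uncurry_of_continuous_of_measurable (fun ω => by fun_prop) fun y => by fun_prop
  have hFG : AEStronglyMeasurable
      (fun ω => (∫ x in Ioc 0 t, F x ω) * ∫ y in Ioc 0 t, G y ω) ℙ :=
    ((hF.comp measurable_swap).stronglyMeasurable.integral_prod_right'.mul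
      (hG.comp measurable_swap).stronglyMeasurable.integral_prod_right').aestronglyMeasurable
  rw [integral_eq_lintegral_of_nonneg_ae (ae_of_all _ fun ω => by positivity) hFG,
    lintegral_ofReal_setIntegral_mul_setIntegral hF hG (fun _ _ => by positivity)
      (fun _ _ => by positivity) (fun ω => (by fun_prop : Continuous (F · ω)).integrableOn_Ioc)
      (fun ω => (by fun_prop : Continuous (G · ω)).integrableOn_Ioc)]
  congr 1
  refine setLIntegral_congr_fun (measurableSet_Ioc.prod measurableSet_Ioc) fun p hp => ?_
  have hpos : 0 < mgf (fun ω => σ₁ * X p.1 ω + σ₂ * Y p.2 ω) ℙ 1 := by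
    rw [hmgf p.1 p.2 hp.1.1.le hp.2.1.le]
    exact exp_pos _
  calc ∫⁻ ω, ENNReal.ofReal (F p.1 ω) * ENNReal.ofReal (G p.2 ω)
      = ∫⁻ ω, ENNReal.ofReal (exp (-(l₁ + σ₁ ^ 2 / 2) * p.1 - (l₂ + σ₂ ^ 2 / 2) * p.2)) *
          ENNReal.ofReal (exp (1 * (σ₁ * X p.1 ω + σ₂ * Y p.2 ω))) := by
        refine lintegral_congr fun ω => ?_
        simp only [F, G, ← ENNReal.ofReal_mul (exp_pos _).le, ← exp_add]
        ring_nf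
    _ = ENNReal.ofReal (exp (-(l₁ + σ₁ ^ 2 / 2) * p.1 - (l₂ + σ₂ ^ 2 / 2) * p.2)) *
          ENNReal.ofReal (mgf (fun ω => σ₁ * X p.1 ω + σ₂ * Y p.2 ω) ℙ 1) := by
        rw [lintegral_const_mul _ (by fun_prop), ofReal_mgf_eq_lintegral hpos]
    _ = expMinKernel l₁ l₂ c p := by
        rw [hmgf p.1 p.2 hp.1.1.le hp.2.1.le, ← ENNReal.ofReal_mul (exp_pos _).le, ← exp_add,
          expMinKernel]
        ring_nf

lemma tendsto_integral_setIntegral_mul_setIntegral_exp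
    (hXc : ∀ᵐ ω, Continuous fun t => X t ω) (hYc : ∀ᵐ ω, Continuous fun t => Y t ω)
    (h₁ : 0 < l₁) (h₂ : 0 < l₂) (hc : c < l₁ + l₂) :
    Tendsto (fun t => ∫ ω, (∫ x in Ioc 0 t, exp (-(l₁ + σ₁ ^ 2 / 2) * x) * exp (σ₁ * X x ω)) *
        ∫ y in Ioc 0 t, exp (-(l₂ + σ₂ ^ 2 / 2) * y) * exp (σ₂ * Y y ω)) atTop
      (nhds ((l₁ + l₂) / (l₁ * l₂ * (l₁ + l₂ - c)))) := by
  have hd : 0 < l₁ + l₂ - c := by linarith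
  -- Tonelli needs `(t, ω) ↦ X t ω` jointly measurable, hence every path continuous.
  obtain ⟨X', hX'm, hX'c, hX'X⟩ := exists_modification_forall_continuous hXm hXc
  obtain ⟨Y', hY'm, hY'c, hY'Y⟩ := exists_modification_forall_continuous hYm hYc
  have hmgf' : ∀ x y, 0 ≤ x → 0 ≤ y → mgf (fun ω => σ₁ * X' x ω + σ₂ * Y' y ω) ℙ 1
      = exp (σ₁ ^ 2 * x / 2 + σ₂ ^ 2 * y / 2 + c * min x y) := by
    intro x y hx hy
    rw [← hmgf x y hx hy]
    refine mgf_congr ?_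
    filter_upwards [hX'X, hY'Y] with ω hXω hYω
    rw [hXω, hYω]
  have hversion : ∀ t : ℝ,
      ∫ ω, (∫ x in Ioc 0 t, exp (-(l₁ + σ₁ ^ 2 / 2) * x) * exp (σ₁ * X x ω)) *
          ∫ y in Ioc 0 t, exp (-(l₂ + σ₂ ^ 2 / 2) * y) * exp (σ₂ * Y y ω)
        = ∫ ω, (∫ x in Ioc 0 t, exp (-(l₁ + σ₁ ^ 2 / 2) * x) * exp (σ₁ * X' x ω)) *
          ∫ y in Ioc 0 t, exp (-(l₂ + σ₂ ^ 2 / 2) * y) * exp (σ₂ * Y' y ω) := fun t => by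
    refine integral_congr_ae ?_
    filter_upwards [hX'X, hY'Y] with ω hXω hYω
    simp only [hXω, hYω]
  simp_rw [hversion, integral_setIntegral_mul_setIntegral_exp hX'm hY'm hmgf' hX'c hY'c]
  have h := tendsto_setLIntegral_Ioc_prod_Ioc (expMinKernel l₁ l₂ c)
  rw [setLIntegral_expMinKernel_Ioi_prod_Ioi h₁ h₂ hc] at h
  have h' := (ENNReal.tendsto_toReal ENNReal.ofReal_ne_top).comp h
  rwa [ENNReal.toReal_ofReal (div_pos (add_pos h₁ h₂) (mul_pos (mul_pos h₁ h₂) hd)).le] at h'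

end ProductInput

lemma mgf_correlated_brownian {Ω : Type*} [MeasureSpace Ω] {A B C : ℝ → Ω → ℝ}
    (hA : IsStdBrownianMotion A) (hB : IsStdBrownianMotion B) (hC : IsStdBrownianMotion C)
    (hindep : iIndepFun (fun i : Fin 3 => fun ω => fun t : ℝ => (![A, B, C] i) t ω) ℙ)
    {α β : ℝ} (hα : α ^ 2 ≤ 1) (hβ : β ^ 2 ≤ 1) (σ₁ σ₂ : ℝ) {x y : ℝ} (hx : 0 ≤ x) (hy : 0 ≤ y) :
    mgf (fun ω => σ₁ * (α * A x ω + √(1 - α ^ 2) * B x ω)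
        + σ₂ * (β * A y ω + √(1 - β ^ 2) * C y ω)) ℙ 1
      = exp (σ₁ ^ 2 * x / 2 + σ₂ ^ 2 * y / 2 + α * β * σ₁ * σ₂ * min x y) := by
  have h := mgf_combination_of_iIndepFun_brownian hA hB hC hindep hx hy (σ₁ * α)
    (σ₁ * √(1 - α ^ 2)) (σ₂ * β) (σ₂ * √(1 - β ^ 2))
  simp only [mul_pow, sq_sqrt (sub_nonneg.2 hα), sq_sqrt (sub_nonneg.2 hβ)] at h
  convert h using 2
  · ext ω
    ring
  · ring

lemma mul_mul_mul_lt_add {α β σ₁ σ₂ l₁ l₂ : ℝ} (hα : α ∈ Icc (-1 : ℝ) 1)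
    (hβ : β ∈ Icc (-1 : ℝ) 1) (h₁ : σ₁ ^ 2 / 2 < l₁) (h₂ : σ₂ ^ 2 / 2 < l₂) :
    α * β * σ₁ * σ₂ < l₁ + l₂ := by
  have hαβ : |α * β| ≤ 1 := by
    rw [abs_mul]
    exact mul_le_one₀ (abs_le.2 hα) (abs_nonneg β) (abs_le.2 hβ)
  obtain ⟨hlo, hhi⟩ := abs_le.1 hαβ
  -- `2 (σ₁² + σ₂²) - 4 αβ σ₁σ₂ = (1 + αβ)(σ₁ - σ₂)² + (1 - αβ)(σ₁ + σ₂)²`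
  nlinarith [mul_nonneg (neg_le_iff_add_nonneg'.1 hlo) (sq_nonneg (σ₁ - σ₂)),
    mul_nonneg (sub_nonneg.2 hhi) (sq_nonneg (σ₁ + σ₂))]

/-- Bimolecular reaction with two multiplicatively noisy reactants driven by correlated
noises. Let `A, B, C` be independent standard Brownian motions, `α, β ∈ [−1, 1]`,
`U_t = α A_t + √(1−α²) B_t`, `W_t = β A_t + √(1−β²) C_t`, `ρ = αβ`. With `X̄₁, X̄₂ > 0`,
`σᵢ > 0`, `λᵢ > σᵢ²/2`, the product input
`u(t) = (λ₁X̄₁ ∫₀^t e^{−(λ₁+σ₁²/2)x} e^{σ₁U_x} dx)(λ₂X̄₂ ∫₀^t e^{−(λ₂+σ₂²/2)y} e^{σ₂W_y} dy)`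
satisfies `lim_{t→∞} E[u(t)] = X̄₁X̄₂(λ₁+λ₂)/(λ₁+λ₂−ρσ₁σ₂)`; in particular positive
correlation increases the limiting mean above `X̄₁X̄₂` and negative correlation decreases
it. -/
theorem correlated_multiplicative_noise_shifts_mean
    {Ω : Type*} [MeasureSpace Ω] [IsProbabilityMeasure (ℙ : Measure Ω)]
    (A B C : ℝ → Ω → ℝ)
    (hA : IsStdBrownianMotion A) (hB : IsStdBrownianMotion B) (hC : IsStdBrownianMotion C)
    (hindep : iIndepFun
      (fun i : Fin 3 => fun ω => fun t : ℝ => (![A, B, C] i) t ω) ℙ)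
    (α β : ℝ) (hα : α ∈ Set.Icc (-1 : ℝ) 1) (hβ : β ∈ Set.Icc (-1 : ℝ) 1)
    (U W : ℝ → Ω → ℝ)
    (hU : ∀ t ω, U t ω = α * A t ω + Real.sqrt (1 - α ^ 2) * B t ω)
    (hWdef : ∀ t ω, W t ω = β * A t ω + Real.sqrt (1 - β ^ 2) * C t ω)
    (ρ : ℝ) (hρ : ρ = α * β)
    (X₁ X₂ σ₁ σ₂ lam₁ lam₂ : ℝ) (hX₁ : 0 < X₁) (hX₂ : 0 < X₂) (hσ₁ : 0 < σ₁) (hσ₂ : 0 < σ₂)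
    (hlam₁ : σ₁ ^ 2 / 2 < lam₁) (hlam₂ : σ₂ ^ 2 / 2 < lam₂)
    (u : ℝ → Ω → ℝ)
    (hu : ∀ t ω, u t ω =
      (lam₁ * X₁ * ∫ x in (0 : ℝ)..t, Real.exp (-(lam₁ + σ₁ ^ 2 / 2) * x) * Real.exp (σ₁ * U x ω)) *
      (lam₂ * X₂ * ∫ y in (0 : ℝ)..t, Real.exp (-(lam₂ + σ₂ ^ 2 / 2) * y) * Real.exp (σ₂ * W y ω))) :
    Tendsto (fun t : ℝ => ∫ ω, u t ω) atTop
        (nhds (X₁ * X₂ * (lam₁ + lam₂) / (lam₁ + lam₂ - ρ * σ₁ * σ₂))) ∧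
      (0 < ρ → X₁ * X₂ < X₁ * X₂ * (lam₁ + lam₂) / (lam₁ + lam₂ - ρ * σ₁ * σ₂)) ∧
      (ρ < 0 → X₁ * X₂ * (lam₁ + lam₂) / (lam₁ + lam₂ - ρ * σ₁ * σ₂) < X₁ * X₂) := by
  obtain rfl : U = fun t ω => α * A t ω + √(1 - α ^ 2) * B t ω := funext fun t => funext (hU t)
  obtain rfl : W = fun t ω => β * A t ω + √(1 - β ^ 2) * C t ω :=
    funext fun t => funext (hWdef t)
  subst hρ
  have hα2 : α ^ 2 ≤ 1 := sq_le_one_iff_abs_le_one α |>.2 (abs_le.2 hα)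
  have hβ2 : β ^ 2 ≤ 1 := sq_le_one_iff_abs_le_one β |>.2 (abs_le.2 hβ)
  have hl₁ : 0 < lam₁ := (by positivity : (0 : ℝ) ≤ σ₁ ^ 2 / 2).trans_lt hlam₁
  have hl₂ : 0 < lam₂ := (by positivity : (0 : ℝ) ≤ σ₂ ^ 2 / 2).trans_lt hlam₂
  have hc : α * β * σ₁ * σ₂ < lam₁ + lam₂ := mul_mul_mul_lt_add hα hβ hlam₁ hlam₂
  have hd : 0 < lam₁ + lam₂ - α * β * σ₁ * σ₂ := by linarith
  have hAm := hA.1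
  have hBm := hB.1
  have hCm := hC.1
  have hlim := (tendsto_integral_setIntegral_mul_setIntegral_exp (fun t => by fun_prop)
    (fun t => by fun_prop)
    (fun x y hx hy => mgf_correlated_brownian hA hB hC hindep hα2 hβ2 σ₁ σ₂ hx hy)
    (by filter_upwards [hA.2.2.2.2, hB.2.2.2.2] with ω hAc hBc; fun_prop)
    (by filter_upwards [hA.2.2.2.2, hC.2.2.2.2] with ω hAc hCc; fun_prop)
    hl₁ hl₂ hc).const_mul (lam₁ * X₁ * (lam₂ * X₂))
  refine ⟨?_, fun hρ0 => ?_, fun hρ0 => ?_⟩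
  · rw [show lam₁ * X₁ * (lam₂ * X₂) *
        ((lam₁ + lam₂) / (lam₁ * lam₂ * (lam₁ + lam₂ - α * β * σ₁ * σ₂)))
      = X₁ * X₂ * (lam₁ + lam₂) / (lam₁ + lam₂ - α * β * σ₁ * σ₂) by field_simp] at hlim
    refine hlim.congr' ?_
    filter_upwards [eventually_ge_atTop 0] with t ht
    rw [← integral_const_mul]
    congr 1 with ω
    rw [hu, intervalIntegral.integral_of_le ht, intervalIntegral.integral_of_le ht]
    ring
  · rw [lt_div_iff₀ hd]
    nlinarith [mul_pos hX₁ hX₂, mul_pos (mul_pos hρ0 hσ₁) hσ₂]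
  · rw [div_lt_iff₀ hd]
    nlinarith [mul_pos hX₁ hX₂, mul_pos (mul_pos (neg_pos.2 hρ0) hσ₁) hσ₂]
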